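/- With the notation of the entropy decomposition, for each interval index i, Σ_{j} p_A(I_j)·Σ_x p_A(x|I_j)·log(N_j/(N_j+1)) ≤ 0; consequently the unclipped interval estimator has nonpositive excess: E[Ĥ*] − H(p) ≤ 0, where E[Ĥ*] = Σ_j p_A(I_j)·Σ_x p_A(x|I_j)·E[log(N_j/(N_{x,j}+1))] and N_{x,j} ~ Bin(N_j, p(x)). -/
import Mathlib

open Finset

/-- pmf of Bin(m,r) at i -/
noncomputable def binomPMF (m : ℕ) (r : ℝ) (i : ℕ) : ℝ :=
  (m.choose i : ℝ) * r ^ i * (1 - r) ^ (m - i)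

/-- expectation of f(X) for X ~ Bin(m,r) -/
noncomputable def binomExp (m : ℕ) (r : ℝ) (f : ℕ → ℝ) : ℝ :=
  ∑ i ∈ Finset.range (m + 1), binomPMF m r i * f i

lemma binomPMF_nonneg (m : ℕ) (r : ℝ) (hr : 0 ≤ r) (hr1 : r ≤ 1) (i : ℕ) :
    0 ≤ binomPMF m r i := by
  unfold binomPMF
  have h1 : (0:ℝ) ≤ 1 - r := by linarith
  positivity

lemma binom_sum_one (m : ℕ) (r : ℝ) :
    ∑ i ∈ Finset.range (m + 1), binomPMF m r i = 1 := by
  have h := add_pow r (1 - r) m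
  simp only [add_sub_cancel, one_pow] at h
  rw [eq_comm, h]
  exact Finset.sum_congr rfl fun i _ => by unfold binomPMF; ring

lemma binomExp_log_le (N : ℕ) (hN : 0 < N) (r : ℝ) (hr : 0 < r) (hr1 : r ≤ 1) :
    binomExp N r (fun i => Real.log ((N : ℝ) / ((i : ℝ) + 1))) ≤ -Real.log r := by
  have hw : ∀ i, 0 ≤ binomPMF N r i := binomPMF_nonneg N r hr.le hr1
  have hsum1 : ∑ i ∈ Finset.range (N + 1), binomPMF N r i = 1 := binom_sum_one N r
  have hNpos : (0:ℝ) < N := by exact_mod_cast hN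
  -- step 1: binomExp + log r = ∑ w_i log (N r / (i+1))
  have h1 : binomExp N r (fun i => Real.log ((N : ℝ) / ((i : ℝ) + 1))) + Real.log r
      = ∑ i ∈ Finset.range (N + 1),
          binomPMF N r i * Real.log ((N : ℝ) * r / ((i : ℝ) + 1)) := by
    rw [binomExp]
    have step : ∀ i ∈ Finset.range (N + 1),
        binomPMF N r i * Real.log ((N : ℝ) * r / ((i : ℝ) + 1))
        = binomPMF N r i * Real.log ((N : ℝ) / ((i : ℝ) + 1)) + binomPMF N r i * Real.log r := by
      intro i _
      have hi : (0:ℝ) < (i:ℝ) + 1 := by positivity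
      have h' : (N : ℝ) * r / ((i : ℝ) + 1) = ((N:ℝ) / ((i:ℝ)+1)) * r := by ring
      rw [h', Real.log_mul (by positivity) (ne_of_gt hr)]
      ring
    rw [Finset.sum_congr rfl step, Finset.sum_add_distrib, ← Finset.sum_mul, hsum1, one_mul]
  -- step 2: termwise log t ≤ t - 1
  have h2 : ∑ i ∈ Finset.range (N + 1),
        binomPMF N r i * Real.log ((N : ℝ) * r / ((i : ℝ) + 1))
      ≤ ∑ i ∈ Finset.range (N + 1),
        binomPMF N r i * ((N : ℝ) * r / ((i : ℝ) + 1) - 1) := by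
    refine Finset.sum_le_sum fun i _ => ?_
    refine mul_le_mul_of_nonneg_left ?_ (hw i)
    exact Real.log_le_sub_one_of_pos (by positivity)
  -- step 3: the key binomial identity bound
  have h3 : ∑ i ∈ Finset.range (N + 1),
        binomPMF N r i * (((N:ℝ)+1) * r / ((i : ℝ) + 1)) ≤ 1 := by
    have hterm : ∀ i ∈ Finset.range (N + 1),
        binomPMF N r i * (((N:ℝ)+1) * r / ((i : ℝ) + 1)) = binomPMF (N+1) r (i+1) := by
      intro i _
      have hc : ((N:ℝ)+1) * (N.choose i : ℝ) = ((N+1).choose (i+1) : ℝ) * ((i:ℝ)+1) := by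
        exact_mod_cast Nat.add_one_mul_choose_eq N i
      have hi : ((i:ℝ) + 1) ≠ 0 := by positivity
      have hC : (((N+1).choose (i+1)):ℝ) = ((N:ℝ)+1) * (N.choose i : ℝ) / ((i:ℝ)+1) := by
        rw [eq_div_iff hi]; linarith
      unfold binomPMF
      rw [Nat.succ_sub_succ, hC]
      ring
    rw [Finset.sum_congr rfl hterm]
    have h4 : ∑ i ∈ Finset.range (N + 2), binomPMF (N+1) r i = 1 := binom_sum_one (N+1) r
    rw [Finset.sum_range_succ'] at h4
    have h0 : 0 ≤ binomPMF (N+1) r 0 := binomPMF_nonneg (N+1) r hr.le hr1 0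
    linarith
  have h3' : ∑ i ∈ Finset.range (N + 1),
        binomPMF N r i * ((N:ℝ) * r / ((i : ℝ) + 1)) ≤ 1 := by
    refine le_trans (Finset.sum_le_sum fun i _ => ?_) h3
    refine mul_le_mul_of_nonneg_left ?_ (hw i)
    have hi : (0:ℝ) < (i:ℝ) + 1 := by positivity
    gcongr
    nlinarith
  have h5 : ∑ i ∈ Finset.range (N + 1),
        binomPMF N r i * ((N : ℝ) * r / ((i : ℝ) + 1) - 1)
      = (∑ i ∈ Finset.range (N + 1),
          binomPMF N r i * ((N:ℝ) * r / ((i : ℝ) + 1))) - 1 := by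
    have step : ∀ i ∈ Finset.range (N + 1),
        binomPMF N r i * ((N : ℝ) * r / ((i : ℝ) + 1) - 1)
        = binomPMF N r i * ((N:ℝ) * r / ((i : ℝ) + 1)) - binomPMF N r i := by
      intro i _; ring
    rw [Finset.sum_congr rfl step, Finset.sum_sub_distrib, hsum1]
  linarith

/-- The unclipped interval-based estimator has nonpositive excess bias. -/
theorem unclipped_bias_nonpos (k T : ℕ) (p : Fin k → ℝ)
    (hpos : ∀ x, 0 < p x) (hsum : ∑ x, p x = 1)
    (A : Fin k → Fin T → ℝ) (hA0 : ∀ x j, 0 ≤ A x j) (hA1 : ∀ x, ∑ j, A x j = 1)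
    (N : Fin T → ℕ) (hN : ∀ j, 0 < N j) :
    (∑ j, (∑ x, p x * A x j) *
        (∑ x, (p x * A x j / (∑ y, p y * A y j)) *
          Real.log ((N j : ℝ) / ((N j : ℝ) + 1))) ≤ 0) ∧
    (∑ j, (∑ x, p x * A x j) *
        (∑ x, (p x * A x j / (∑ y, p y * A y j)) *
          binomExp (N j) (p x) (fun i => Real.log ((N j : ℝ) / ((i : ℝ) + 1))))) -
      (-∑ x, p x * Real.log (p x)) ≤ 0 := by
  have hwnn : ∀ x j, 0 ≤ p x * A x j := fun x j => mul_nonneg (hpos x).le (hA0 x j)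
  have hSnn : ∀ j, 0 ≤ ∑ y, p y * A y j := fun j => Finset.sum_nonneg fun y _ => hwnn y j
  have hple : ∀ x, p x ≤ 1 := fun x => by
    rw [← hsum]
    exact Finset.single_le_sum (fun y _ => (hpos y).le) (Finset.mem_univ x)
  constructor
  · refine Finset.sum_nonpos fun j _ => mul_nonpos_of_nonneg_of_nonpos (hSnn j) ?_
    refine Finset.sum_nonpos fun x _ => mul_nonpos_of_nonneg_of_nonpos
      (div_nonneg (hwnn x j) (hSnn j)) ?_
    apply Real.log_nonpos
    · positivity
    · rw [div_le_one (by positivity)]; linarith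
  · rw [sub_nonpos]
    have key : ∀ j, (∑ x, p x * A x j) *
        (∑ x, (p x * A x j / (∑ y, p y * A y j)) *
          binomExp (N j) (p x) (fun i => Real.log ((N j : ℝ) / ((i : ℝ) + 1))))
        ≤ ∑ x, p x * A x j * (-Real.log (p x)) := by
      intro j
      rcases eq_or_lt_of_le (hSnn j) with hS | hS
      · have hz : ∀ x ∈ Finset.univ, p x * A x j = 0 := by
          intro x _
          exact (Finset.sum_eq_zero_iff_of_nonneg (fun y _ => hwnn y j)).mp hS.symm x
            (Finset.mem_univ x)
        rw [show (∑ x, p x * A x j) = 0 from hS.symm ▸ rfl]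
        rw [zero_mul]
        refine le_of_eq (Finset.sum_eq_zero fun x hx => ?_).symm
        rw [hz x hx, zero_mul]
      · rw [Finset.mul_sum]
        refine Finset.sum_le_sum fun x _ => ?_
        have heq : (∑ x, p x * A x j) * (p x * A x j / (∑ y, p y * A y j) *
            binomExp (N j) (p x) (fun i => Real.log ((N j : ℝ) / ((i : ℝ) + 1))))
            = p x * A x j *
              binomExp (N j) (p x) (fun i => Real.log ((N j : ℝ) / ((i : ℝ) + 1))) := by
          field_simp
        rw [heq]
        exact mul_le_mul_of_nonneg_left
          (binomExp_log_le (N j) (hN j) (p x) (hpos x) (hple x)) (hwnn x j)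
    calc ∑ j, (∑ x, p x * A x j) *
        (∑ x, (p x * A x j / (∑ y, p y * A y j)) *
          binomExp (N j) (p x) (fun i => Real.log ((N j : ℝ) / ((i : ℝ) + 1))))
        ≤ ∑ j, ∑ x, p x * A x j * (-Real.log (p x)) :=
          Finset.sum_le_sum fun j _ => key j
      _ = ∑ x, ∑ j, p x * A x j * (-Real.log (p x)) := Finset.sum_comm
      _ = -∑ x, p x * Real.log (p x) := by
          rw [← Finset.sum_neg_distrib]
          refine Finset.sum_congr rfl fun x _ => ?_
          have : ∑ j, p x * A x j * (-Real.log (p x))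
              = (p x * (-Real.log (p x))) * ∑ j, A x j := by
            rw [Finset.mul_sum]
            exact Finset.sum_congr rfl fun j _ => by ring
          rw [this, hA1 x]
          ring
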